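/- arXiv:1301.1995 — 2 statements merged into one kernel-verified Lean document; each statement's English description precedes it below -/
import Mathlib

section
/- Let λ = (λ₁,λ₂,λ₃) ∈ ℝ³ satisfy |λ₃| ≤ 1, |λ₁ + λ₂| ≤ 1 + λ₃, and |λ₁ − λ₂| ≤ 1 − λ₃. Define p_I = (1+λ₁+λ₂+λ₃)/4, p_X = (1+λ₁−λ₂−λ₃)/4, p_Y = (1−λ₁+λ₂−λ₃)/4, p_Z = (1−λ₁−λ₂+λ₃)/4. Then p_I, p_X, p_Y, p_Z are all nonnegative, p_I + p_X + p_Y + p_Z = 1, and for every w ∈ ℝ³ the Pauli channel with these probabilities realizes the diagonal Bloch action: p_I·ρ_w + p_X·Xρ_wX + p_Y·Yρ_wY + p_Z·Zρ_wZ = ρ_{(λ₁w₁, λ₂w₂, λ₃w₃)}. In particular, every unital qubit channel whose Bloch-sphere action is w ↦ (λ₁w₁,λ₂w₂,λ₃w₃) with these constraints is a Pauli channel. -/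
noncomputable section

/-- The Pauli matrix X. -/
def X : Matrix (Fin 2) (Fin 2) ℂ := !![0, 1; 1, 0]

/-- The Pauli matrix Y. -/
def Y : Matrix (Fin 2) (Fin 2) ℂ := !![0, -Complex.I; Complex.I, 0]

/-- The Pauli matrix Z. -/
def Z : Matrix (Fin 2) (Fin 2) ℂ := !![1, 0; 0, -1]

/-- The Bloch matrix ρ_w = (1/2)(I + w₁X + w₂Y + w₃Z). -/
def bloch (w : Fin 3 → ℝ) : Matrix (Fin 2) (Fin 2) ℂ :=
  (1 / 2 : ℂ) • (1 + (w 0 : ℂ) • X + (w 1 : ℂ) • Y + (w 2 : ℂ) • Z)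


lemma bloch_eq (w : Fin 3 → ℝ) :
    bloch w = !![((1 + w 2 : ℂ))/2, ((w 0 : ℂ) - (w 1 : ℂ) * Complex.I)/2;
                 ((w 0 : ℂ) + (w 1 : ℂ) * Complex.I)/2, ((1 - w 2 : ℂ))/2] := by
  ext i j
  fin_cases i <;> fin_cases j <;>
    simp [bloch, X, Y, Z, Matrix.one_apply] <;> ring

lemma Xconj (a b c d : ℂ) : X * !![a, b; c, d] * X = !![d, c; b, a] := by
  ext i j
  fin_cases i <;> fin_cases j <;>
    simp [X, Matrix.mul_apply, Fin.sum_univ_succ]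

lemma Yconj (a b c d : ℂ) : Y * !![a, b; c, d] * Y = !![d, -c; -b, a] := by
  ext i j
  fin_cases i <;> fin_cases j <;>
    simp [Y, Matrix.mul_apply, Fin.sum_univ_succ] <;> ring_nf <;>
    simp [Complex.I_sq]

lemma Zconj (a b c d : ℂ) : Z * !![a, b; c, d] * Z = !![a, -b; -c, d] := by
  ext i j
  fin_cases i <;> fin_cases j <;>
    simp [Z, Matrix.mul_apply, Fin.sum_univ_succ]

lemma combo (p q r s a b c d a' b' c' d' : ℂ)
    (h1 : p * a + q * d + r * d + s * a = a')
    (h2 : p * b + q * c - r * c - s * b = b')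
    (h3 : p * c + q * b - r * b - s * c = c')
    (h4 : p * d + q * a + r * a + s * d = d') :
    p • !![a, b; c, d] + q • (X * !![a, b; c, d] * X) +
      r • (Y * !![a, b; c, d] * Y) + s • (Z * !![a, b; c, d] * Z) = !![a', b'; c', d'] := by
  rw [Xconj, Yconj, Zconj]
  ext i j
  fin_cases i <;> fin_cases j <;>
    simp [Matrix.smul_apply, Matrix.add_apply]
  · linear_combination h1
  · linear_combination h2
  · linear_combination h3
  · linear_combination h4

set_option maxHeartbeats 1000000 in
theorem pauli_channel_realizes_diagonal_bloch_action (l : Fin 3 → ℝ)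
    (h3 : |l 2| ≤ 1) (h12 : |l 0 + l 1| ≤ 1 + l 2) (h12' : |l 0 - l 1| ≤ 1 - l 2) :
    0 ≤ (1 + l 0 + l 1 + l 2) / 4 ∧
    0 ≤ (1 + l 0 - l 1 - l 2) / 4 ∧
    0 ≤ (1 - l 0 + l 1 - l 2) / 4 ∧
    0 ≤ (1 - l 0 - l 1 + l 2) / 4 ∧
    (1 + l 0 + l 1 + l 2) / 4 + (1 + l 0 - l 1 - l 2) / 4 +
      (1 - l 0 + l 1 - l 2) / 4 + (1 - l 0 - l 1 + l 2) / 4 = 1 ∧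
    ∀ w : Fin 3 → ℝ,
      (((1 + l 0 + l 1 + l 2) / 4 : ℝ) : ℂ) • bloch w +
        (((1 + l 0 - l 1 - l 2) / 4 : ℝ) : ℂ) • (X * bloch w * X) +
        (((1 - l 0 + l 1 - l 2) / 4 : ℝ) : ℂ) • (Y * bloch w * Y) +
        (((1 - l 0 - l 1 + l 2) / 4 : ℝ) : ℂ) • (Z * bloch w * Z)
      = bloch ![l 0 * w 0, l 1 * w 1, l 2 * w 2] := by

  rw [abs_le] at h3 h12 h12'
  refine ⟨by linarith, by linarith, by linarith, by linarith, by ring, ?_⟩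
  intro w
  rw [bloch_eq w, bloch_eq ![l 0 * w 0, l 1 * w 1, l 2 * w 2]]
  apply combo <;> · simp only [Matrix.cons_val_zero, Matrix.cons_val_one, Matrix.head_cons,
    Matrix.cons_val_two, Matrix.tail_cons]
                    push_cast
                    ring
end
end

section
/- Exponential convergence of amplitude damping to its fixed point: for every p ∈ (0,1], every qubit density matrix ρ, and every k ∈ ℕ, the k-fold application of the amplitude damping channel satisfies ‖A_p^k(ρ) − E₀₀‖₂ ≤ 2·(1−p)^{k/2}, where E₀₀ = !![1,0;0,0]. -/
open Matrix
open scoped ComplexOrder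

noncomputable section

/-- The amplitude damping channel A_p(ρ) = K₀ρK₀† + K₁ρK₁†. -/
def ampDamp (p : ℝ) (ρ : Matrix (Fin 2) (Fin 2) ℂ) : Matrix (Fin 2) (Fin 2) ℂ :=
  !![1, 0; 0, (Real.sqrt (1 - p) : ℂ)] * ρ * (!![1, 0; 0, (Real.sqrt (1 - p) : ℂ)])ᴴ +
    !![0, (Real.sqrt p : ℂ); 0, 0] * ρ * (!![0, (Real.sqrt p : ℂ); 0, 0])ᴴ

/-- The Frobenius (Hilbert–Schmidt) norm of a complex matrix. -/
def frob {m n : Type*} [Fintype m] [Fintype n] (A : Matrix m n ℂ) : ℝ :=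
  Real.sqrt (∑ i, ∑ j, ‖A i j‖ ^ 2)


/-! `ampDamp p` is linear and fixes `E₀₀ = !![1, 0; 0, 0]`, so `A_p^k(ρ) - E₀₀ = A_p^k(ρ - E₀₀)`
with `ρ - E₀₀` traceless. On a traceless matrix `A_p` multiplies the diagonal by `1 - p` and the
off-diagonal by `√(1 - p)`, hence contracts the Frobenius norm by `√(1 - p)`; it also preserves
the trace, so the contraction iterates. Finally `‖ρ - E₀₀‖₂ ≤ √2` for a density matrix, because
`|ρ₀₁|² ≤ ρ₀₀ ρ₁₁` (the determinant of a positive semidefinite matrix is nonnegative). -/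

theorem Matrix.PosSemidef.norm_apply_sq_le {n 𝕜 : Type*} [Fintype n] [RCLike 𝕜]
    {A : Matrix n n 𝕜} (hA : A.PosSemidef) (i j : n) :
    ‖A i j‖ ^ 2 ≤ ‖A i i‖ * ‖A j j‖ := by
  have hdet := (hA.submatrix ![i, j]).det_nonneg
  rw [det_fin_two] at hdet
  simp only [submatrix_apply, Matrix.cons_val_zero, Matrix.cons_val_one] at hdet
  rw [← hA.1.apply j i, RCLike.star_def, RCLike.mul_conj,
    ← RCLike.norm_of_nonneg' (hA.diag_nonneg (i := i)),
    ← RCLike.norm_of_nonneg' (hA.diag_nonneg (i := j))] at hdet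
  exact_mod_cast sub_nonneg.mp hdet

theorem frob_fin_two (A : Matrix (Fin 2) (Fin 2) ℂ) :
    frob A = √(‖A 0 0‖ ^ 2 + ‖A 0 1‖ ^ 2 + ‖A 1 0‖ ^ 2 + ‖A 1 1‖ ^ 2) := by
  simp only [frob, Fin.sum_univ_two, add_assoc]

section
variable {p : ℝ}

theorem ampDamp_sub (A B : Matrix (Fin 2) (Fin 2) ℂ) :
    ampDamp p (A - B) = ampDamp p A - ampDamp p B := by
  simp only [ampDamp, mul_sub, sub_mul]
  abel

theorem ampDamp_ground : ampDamp p !![1, 0; 0, 0] = !![1, 0; 0, 0] := by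
  ext i j
  fin_cases i <;> fin_cases j <;>
    simp [ampDamp, vecMul, dotProduct, Fin.sum_univ_two]

theorem ampDamp_apply (hp0 : 0 ≤ p) (hp1 : p ≤ 1) (ρ : Matrix (Fin 2) (Fin 2) ℂ) :
    ampDamp p ρ = !![ρ 0 0 + p * ρ 1 1, √(1 - p) * ρ 0 1; √(1 - p) * ρ 1 0, (1 - p) * ρ 1 1] := by
  have hsq_p : (√p : ℂ) * √p = p := by exact_mod_cast Real.mul_self_sqrt hp0
  have hsq_q : (√(1 - p) : ℂ) * √(1 - p) = 1 - p := by
    exact_mod_cast Real.mul_self_sqrt (sub_nonneg.mpr hp1)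
  ext i j
  fin_cases i <;> fin_cases j <;>
    simp [ampDamp, vecMul, dotProduct, mul_apply, Fin.sum_univ_two]
  · linear_combination ρ 1 1 * hsq_p
  · ring
  · linear_combination ρ 1 1 * hsq_q

theorem trace_ampDamp (hp0 : 0 ≤ p) (hp1 : p ≤ 1) (ρ : Matrix (Fin 2) (Fin 2) ℂ) :
    (ampDamp p ρ).trace = ρ.trace := by
  rw [ampDamp_apply hp0 hp1, trace_fin_two, trace_fin_two]
  simp only [of_apply, cons_val', cons_val_zero, cons_val_one, empty_val', cons_val_fin_one]
  ring

theorem iterate_ampDamp_sub_ground (k : ℕ) (ρ : Matrix (Fin 2) (Fin 2) ℂ) :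
    (ampDamp p)^[k] ρ - !![1, 0; 0, 0] = (ampDamp p)^[k] (ρ - !![1, 0; 0, 0]) := by
  induction k with
  | zero => rfl
  | succ k ih =>
    rw [Function.iterate_succ_apply', Function.iterate_succ_apply', ← ih, ampDamp_sub,
      ampDamp_ground]

theorem frob_ampDamp_le (hp0 : 0 ≤ p) (hp1 : p ≤ 1) {σ : Matrix (Fin 2) (Fin 2) ℂ}
    (hσ : σ.trace = 0) : frob (ampDamp p σ) ≤ √(1 - p) * frob σ := by
  have hσ00 : σ 0 0 = -σ 1 1 := by rw [trace_fin_two] at hσ; linear_combination hσ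
  have hq0 : 0 ≤ 1 - p := sub_nonneg.mpr hp1
  have hq_sq : (1 - p) ^ 2 ≤ 1 - p := pow_le_of_le_one hq0 (by linarith) two_ne_zero
  rw [frob_fin_two, frob_fin_two, ampDamp_apply hp0 hp1, ← Real.sqrt_mul hq0]
  gcongr
  simp only [of_apply, cons_val', cons_val_zero, cons_val_one, empty_val', cons_val_fin_one]
  have h00 : σ 0 0 + p * σ 1 1 = ((1 - p : ℝ) : ℂ) * -σ 1 1 := by
    rw [hσ00]; push_cast; ring
  have h11 : (1 - p : ℂ) * σ 1 1 = ((1 - p : ℝ) : ℂ) * σ 1 1 := by push_cast; ring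
  rw [h00, h11, hσ00]
  simp only [norm_mul, norm_neg, Complex.norm_of_nonneg hq0,
    Complex.norm_of_nonneg (Real.sqrt_nonneg _), mul_pow, Real.sq_sqrt hq0]
  nlinarith [mul_le_mul_of_nonneg_right hq_sq (sq_nonneg ‖σ 1 1‖)]

theorem frob_iterate_ampDamp_le (hp0 : 0 ≤ p) (hp1 : p ≤ 1) (k : ℕ)
    {σ : Matrix (Fin 2) (Fin 2) ℂ} (hσ : σ.trace = 0) :
    frob ((ampDamp p)^[k] σ) ≤ √(1 - p) ^ k * frob σ := by
  induction k generalizing σ with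
  | zero => simp
  | succ k ih =>
    calc frob ((ampDamp p)^[k] (ampDamp p σ))
        ≤ √(1 - p) ^ k * frob (ampDamp p σ) := ih (by rwa [trace_ampDamp hp0 hp1])
      _ ≤ √(1 - p) ^ k * (√(1 - p) * frob σ) := by gcongr; exact frob_ampDamp_le hp0 hp1 hσ
      _ = √(1 - p) ^ (k + 1) * frob σ := by ring

end

theorem frob_sub_ground_le_sqrt_two {ρ : Matrix (Fin 2) (Fin 2) ℂ} (hρ : ρ.PosSemidef)
    (hρt : ρ.trace = 1) : frob (ρ - !![1, 0; 0, 0]) ≤ √2 := by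
  have hsum : ‖ρ 0 0‖ + ‖ρ 1 1‖ = 1 := by
    rw [trace_fin_two, ← Complex.norm_of_nonneg' hρ.diag_nonneg,
      ← Complex.norm_of_nonneg' (hρ.diag_nonneg (i := 1))] at hρt
    exact_mod_cast hρt
  have h00 : ρ 0 0 - 1 = -ρ 1 1 := by rw [trace_fin_two] at hρt; linear_combination hρt
  have h10 : ‖ρ 1 0‖ = ‖ρ 0 1‖ := by rw [← hρ.1.apply 1 0, norm_star]
  have h01 := hρ.norm_apply_sq_le 0 1
  rw [frob_fin_two]
  gcongr
  simp only [Matrix.sub_apply, of_apply, cons_val', cons_val_zero, cons_val_one, empty_val',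
    cons_val_fin_one, sub_zero, h00, norm_neg, h10]
  nlinarith [norm_nonneg (ρ 0 0), norm_nonneg (ρ 1 1)]

theorem ampDamp_exponential_convergence (p : ℝ) (hp : p ∈ Set.Ioc (0 : ℝ) 1)
    (ρ : Matrix (Fin 2) (Fin 2) ℂ) (hρ : ρ.PosSemidef) (hρt : ρ.trace = 1) (k : ℕ) :
    frob ((ampDamp p)^[k] ρ - !![1, 0; 0, 0]) ≤ 2 * (1 - p) ^ ((k : ℝ) / 2) := by
  obtain ⟨hp0, hp1⟩ := hp
  have hq0 : 0 ≤ 1 - p := sub_nonneg.mpr hp1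
  have hσ : (ρ - !![1, 0; 0, 0]).trace = 0 := by simp [trace_sub, hρt]
  have hsqrt_two : √2 ≤ 2 := Real.sqrt_le_iff.mpr ⟨zero_le_two, by norm_num⟩
  calc frob ((ampDamp p)^[k] ρ - !![1, 0; 0, 0])
      = frob ((ampDamp p)^[k] (ρ - !![1, 0; 0, 0])) := by rw [iterate_ampDamp_sub_ground]
    _ ≤ √(1 - p) ^ k * frob (ρ - !![1, 0; 0, 0]) := frob_iterate_ampDamp_le hp0.le hp1 k hσ
    _ ≤ √(1 - p) ^ k * 2 := by
      gcongr; exact (frob_sub_ground_le_sqrt_two hρ hρt).trans hsqrt_two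
    _ = 2 * (1 - p) ^ ((k : ℝ) / 2) := by
      rw [Real.sqrt_eq_rpow, ← Real.rpow_natCast, ← Real.rpow_mul hq0, mul_comm,
        one_div_mul_eq_div]
end
end
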